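/- Let μ be a real polynomial and set λ(x) = x·μ(x). Define ψ : ℝ³ → ℝ³ by ψ(x, y, z) = (x, ((1 − λ(x)²)y − 2λ(x)z)/(1 + λ(x)²), (2λ(x)y + (1 − λ(x)²)z)/(1 + λ(x)²)). Then: (i) ψ is a smooth bijection of ℝ³ which maps S_Q onto S_Q for every real polynomial Q; (ii) ψ fixes every point whose first coordinate is 0; (iii) ψ is differentiable at (0, 0, 1) and its Fréchet derivative there is the linear map (u, v, w) ↦ (u, v − 2μ(0)·u, w). In particular, for every c ∈ ℝ there exists such a map ψ whose derivative at (0, 0, 1) is (u, v, w) ↦ (u, v + c·u, w). -/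

import Mathlib

/-- The affine surface `y² + z² = Q(x)` in `ℝ³`. -/
def SQ (Q : Polynomial ℝ) : Set (ℝ × ℝ × ℝ) :=
  {v | v.2.1 ^ 2 + v.2.2 ^ 2 = Q.eval v.1}

/-- The twisting map associated to the polynomial `λ(x) = x·μ(x)`:
`(x, y, z) ↦ (x, ((1 − λ(x)²)y − 2λ(x)z)/(1 + λ(x)²), (2λ(x)y + (1 − λ(x)²)z)/(1 + λ(x)²))`. -/
noncomputable def twistPsi (μ : Polynomial ℝ) : ℝ × ℝ × ℝ → ℝ × ℝ × ℝ := fun v =>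
  (v.1,
    ((1 - (v.1 * μ.eval v.1) ^ 2) * v.2.1 - 2 * (v.1 * μ.eval v.1) * v.2.2) /
      (1 + (v.1 * μ.eval v.1) ^ 2),
    (2 * (v.1 * μ.eval v.1) * v.2.1 + (1 - (v.1 * μ.eval v.1) ^ 2) * v.2.2) /
      (1 + (v.1 * μ.eval v.1) ^ 2))

private lemma contDiff_polyeval (p : Polynomial ℝ) : ContDiff ℝ (⊤ : ℕ∞) fun x : ℝ => p.eval x := by
  induction p using Polynomial.induction_on' with
  | add p q hp hq => simpa using hp.add hq
  | monomial n a =>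
      simpa [Polynomial.eval_monomial] using contDiff_const.mul (contDiff_id.pow n)

private lemma twist_inv (μ : Polynomial ℝ) (v : ℝ × ℝ × ℝ) :
    twistPsi (-μ) (twistPsi μ v) = v := by
  obtain ⟨x, y, z⟩ := v
  have h : (0:ℝ) < 1 + (x * μ.eval x) ^ 2 := by positivity
  simp only [twistPsi, Polynomial.eval_neg]
  refine Prod.ext rfl (Prod.ext ?_ ?_) <;> field_simp <;> ring

private lemma twist_mem (μ : Polynomial ℝ) (Q : Polynomial ℝ) (v : ℝ × ℝ × ℝ)
    (hv : v ∈ SQ Q) : twistPsi μ v ∈ SQ Q := by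
  obtain ⟨x, y, z⟩ := v
  have h : (0:ℝ) < 1 + (x * μ.eval x) ^ 2 := by positivity
  simp only [SQ, Set.mem_setOf_eq] at hv ⊢
  simp only [twistPsi]
  rw [div_pow, div_pow, ← add_div, div_eq_iff (by positivity)]
  nlinarith [hv, sq_nonneg (x * μ.eval x)]

private lemma twist_deriv (μ : Polynomial ℝ) :
    ∃ L : ℝ × ℝ × ℝ →L[ℝ] ℝ × ℝ × ℝ,
      (∀ u v w : ℝ, L (u, v, w) = (u, v - 2 * μ.eval 0 * u, w)) ∧
      HasFDerivAt (twistPsi μ) L ((0 : ℝ), (0 : ℝ), (1 : ℝ)) := by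
  set p : ℝ × ℝ × ℝ := ((0:ℝ), (0:ℝ), (1:ℝ)) with hp
  set e1 : ℝ × ℝ × ℝ →L[ℝ] ℝ := ContinuousLinearMap.fst ℝ ℝ (ℝ × ℝ) with he1
  set e2 : ℝ × ℝ × ℝ →L[ℝ] ℝ :=
    (ContinuousLinearMap.fst ℝ ℝ ℝ).comp (ContinuousLinearMap.snd ℝ ℝ (ℝ × ℝ)) with he2
  set e3 : ℝ × ℝ × ℝ →L[ℝ] ℝ :=
    (ContinuousLinearMap.snd ℝ ℝ ℝ).comp (ContinuousLinearMap.snd ℝ ℝ (ℝ × ℝ)) with he3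
  refine ⟨e1.prod ((e2 - (2 * μ.eval 0) • e1).prod e3), fun u v w => ?_, ?_⟩
  · simp [e1, e2, e3]
  · have h1 : HasFDerivAt (fun v : ℝ × ℝ × ℝ => v.1) e1 p := hasFDerivAt_fst
    have h2 : HasFDerivAt (fun v : ℝ × ℝ × ℝ => v.2.1) e2 p :=
      hasFDerivAt_fst.comp p hasFDerivAt_snd
    have h3 : HasFDerivAt (fun v : ℝ × ℝ × ℝ => v.2.2) e3 p :=
      hasFDerivAt_snd.comp p hasFDerivAt_snd
    have hμe : HasFDerivAt (fun v : ℝ × ℝ × ℝ => μ.eval v.1)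
        (μ.derivative.eval 0 • e1) p :=
      (μ.hasDerivAt p.1).comp_hasFDerivAt p h1
    have hlam := h1.mul hμe
    have hlam2 := (hasDerivAt_pow 2 (p.1 * μ.eval p.1)).comp_hasFDerivAt p hlam
    have hA := hlam2.const_sub 1
    have h2lam := hlam.const_mul 2
    have hN1 := (hA.mul h2).sub (h2lam.mul h3)
    have hN2 := (h2lam.mul h2).add (hA.mul h3)
    have hD := hlam2.const_add 1
    have hne : (1 + (p.1 * μ.eval p.1) ^ 2) ≠ 0 := by norm_num [hp]
    have hInv := (hasDerivAt_inv hne).comp_hasFDerivAt p hD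
    have hf2 := hN1.mul hInv
    have hf3 := hN2.mul hInv
    have H := h1.prodMk (hf2.prodMk hf3)
    refine HasFDerivAt.congr_of_eventuallyEq (H.congr_fderiv ?_)
      (Filter.Eventually.of_forall fun v => ?_)
    · ext : 1 <;>
        simp [hp, e1, e2, e3, ContinuousLinearMap.prod_apply, ContinuousLinearMap.comp_apply,
          ContinuousLinearMap.smul_apply, smul_eq_mul, smul_smul, mul_comm]
    · simp [twistPsi, div_eq_mul_inv]

/-- The twisting map `ψ = twistPsi μ` is a smooth bijection of `ℝ³` preserving `S_Q`
for every real polynomial `Q`, it fixes every point with first coordinate `0`, and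
its Fréchet derivative at `(0,0,1)` is `(u,v,w) ↦ (u, v − 2μ(0)u, w)`. In particular,
for every `c ∈ ℝ` some such map has derivative `(u,v,w) ↦ (u, v + cu, w)` at `(0,0,1)`. -/
theorem twistPsi_properties (μ : Polynomial ℝ) :
    Function.Bijective (twistPsi μ) ∧
    ContDiff ℝ (⊤ : ℕ∞) (twistPsi μ) ∧
    (∀ Q : Polynomial ℝ, twistPsi μ '' SQ Q = SQ Q) ∧
    (∀ y z : ℝ, twistPsi μ (0, y, z) = (0, y, z)) ∧
    (∃ L : ℝ × ℝ × ℝ →L[ℝ] ℝ × ℝ × ℝ,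
      (∀ u v w : ℝ, L (u, v, w) = (u, v - 2 * μ.eval 0 * u, w)) ∧
      HasFDerivAt (twistPsi μ) L ((0 : ℝ), (0 : ℝ), (1 : ℝ))) ∧
    (∀ c : ℝ, ∃ μ' : Polynomial ℝ, ∃ L' : ℝ × ℝ × ℝ →L[ℝ] ℝ × ℝ × ℝ,
      (∀ u v w : ℝ, L' (u, v, w) = (u, v + c * u, w)) ∧
      HasFDerivAt (twistPsi μ') L' ((0 : ℝ), (0 : ℝ), (1 : ℝ))) := by
  have hinv1 : ∀ v, twistPsi (-μ) (twistPsi μ v) = v := twist_inv μ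
  have hinv2 : ∀ v, twistPsi μ (twistPsi (-μ) v) = v := by
    intro v; have := twist_inv (-μ) v; rwa [neg_neg] at this
  refine ⟨⟨Function.LeftInverse.injective hinv1, Function.RightInverse.surjective hinv2⟩,
    ?_, ?_, ?_, twist_deriv μ, ?_⟩
  · -- smoothness
    have hlam : ContDiff ℝ (⊤ : ℕ∞) (fun v : ℝ × ℝ × ℝ => v.1 * μ.eval v.1) :=
      contDiff_fst.mul ((contDiff_polyeval μ).comp contDiff_fst)
    have hy : ContDiff ℝ (⊤ : ℕ∞) (fun v : ℝ × ℝ × ℝ => v.2.1) := contDiff_fst.comp contDiff_snd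
    have hz : ContDiff ℝ (⊤ : ℕ∞) (fun v : ℝ × ℝ × ℝ => v.2.2) := contDiff_snd.comp contDiff_snd
    have hne : ∀ v : ℝ × ℝ × ℝ, (1 + (v.1 * μ.eval v.1) ^ 2) ≠ 0 := fun v => by positivity
    exact contDiff_fst.prodMk
      (((((contDiff_const.sub (hlam.pow 2)).mul hy).sub ((contDiff_const.mul hlam).mul hz)).div
          (contDiff_const.add (hlam.pow 2)) hne).prodMk
       ((((contDiff_const.mul hlam).mul hy).add ((contDiff_const.sub (hlam.pow 2)).mul hz)).div
          (contDiff_const.add (hlam.pow 2)) hne))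
  · intro Q
    ext w
    constructor
    · rintro ⟨v, hv, rfl⟩
      exact twist_mem μ Q v hv
    · intro hw
      exact ⟨twistPsi (-μ) w, twist_mem (-μ) Q w hw, hinv2 w⟩
  · intro y z
    simp [twistPsi]
  · intro c
    obtain ⟨L, hL, hd⟩ := twist_deriv (Polynomial.C (-c / 2))
    refine ⟨Polynomial.C (-c / 2), L, fun u v w => ?_, hd⟩
    rw [hL]
    simp
    ring
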